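/- arXiv:1610.09289 — 3 statements merged into one kernel-verified Lean document; each statement's English description precedes it below -/
import Mathlib

section
/- Let X and Y be random variables on finite alphabets 𝒳 and 𝒴 with joint law P_{XY}. Then the Gács–Körner common information admits the characterization C_GK(X;Y) = inf { I(X,Y;U) : U a finite-alphabet auxiliary random variable jointly distributed with (X,Y) via a conditional distribution P_{U|XY}, such that C_GK(X;Y|U) = 0 }, where I(X,Y;U) denotes the mutual information between the pair (X,Y) and U. -/
open scoped BigOperators Classical

noncomputable section

namespace GCI

/-- A bundled finite alphabet. -/
structure FinAlph : Type 1 where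
  carrier : Type
  [fin : Fintype carrier]

instance : CoeSort FinAlph Type := ⟨FinAlph.carrier⟩
instance (A : FinAlph) : Fintype A := A.fin

variable {Ω : Type} [Fintype Ω]

/-- `p` is a probability mass function on the finite sample space `Ω`. -/
def IsPMF (p : Ω → ℝ) : Prop := (∀ ω, 0 ≤ p ω) ∧ ∑ ω, p ω = 1

/-- Expectation of a real random variable `f` under the pmf `p`. -/
def expec (p : Ω → ℝ) (f : Ω → ℝ) : ℝ := ∑ ω, p ω * f ω

/-- Marginal pmf of the random variable `X` under `p`. -/
def marg {𝒳 : Type} (p : Ω → ℝ) (X : Ω → 𝒳) (x : 𝒳) : ℝ :=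
  ∑ ω, if X ω = x then p ω else 0

/-- Conditional expectation `E[f | U = u]`. -/
def cexp {𝒰 : Type} (p : Ω → ℝ) (U : Ω → 𝒰) (u : 𝒰) (f : Ω → ℝ) : ℝ :=
  (∑ ω, if U ω = u then p ω * f ω else 0) / marg p U u

/-- `E[cov(f, g | U)]`. -/
def ccov {𝒰 : Type} (p : Ω → ℝ) (U : Ω → 𝒰) (f g : Ω → ℝ) : ℝ :=
  expec p fun ω => (f ω - cexp p U (U ω) f) * (g ω - cexp p U (U ω) g)

/-- `E[var(f | U)]`. -/
def cvar {𝒰 : Type} (p : Ω → ℝ) (U : Ω → 𝒰) (f : Ω → ℝ) : ℝ := ccov p U f f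

/-- Conditional Pearson correlation `ρ(f; g | U)`. -/
def ccorr {𝒰 : Type} (p : Ω → ℝ) (U : Ω → 𝒰) (f g : Ω → ℝ) : ℝ :=
  if 0 < cvar p U f * cvar p U g then
    ccov p U f g / (Real.sqrt (cvar p U f) * Real.sqrt (cvar p U g))
  else 0

/-- Conditional correlation ratio `θ(X; Y | U)` for a real-valued `X`. -/
def cratio {𝒴 𝒰 : Type} (p : Ω → ℝ) (U : Ω → 𝒰) (X : Ω → ℝ) (Y : Ω → 𝒴) : ℝ :=
  ⨆ g : 𝒴 × 𝒰 → ℝ, ccorr p U X fun ω => g (Y ω, U ω)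

/-- Conditional maximal correlation `ρ_m(X; Y | U)`. -/
def maxCorr {𝒳 𝒴 𝒰 : Type} (p : Ω → ℝ) (U : Ω → 𝒰) (X : Ω → 𝒳) (Y : Ω → 𝒴) : ℝ :=
  ⨆ f : 𝒳 × 𝒰 → ℝ, ⨆ g : 𝒴 × 𝒰 → ℝ,
    ccorr p U (fun ω => f (X ω, U ω)) fun ω => g (Y ω, U ω)

/-- Unconditional Pearson correlation. -/
def corr0 (p : Ω → ℝ) (f g : Ω → ℝ) : ℝ := ccorr p (fun _ => ()) f g

/-- Unconditional correlation ratio `θ(X;Y)`. -/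
def ratio0 {𝒴 : Type} (p : Ω → ℝ) (X : Ω → ℝ) (Y : Ω → 𝒴) : ℝ :=
  cratio p (fun _ => ()) X Y

/-- Unconditional maximal correlation `ρ_m(X;Y)`. -/
def maxCorr0 {𝒳 𝒴 : Type} (p : Ω → ℝ) (X : Ω → 𝒳) (Y : Ω → 𝒴) : ℝ :=
  maxCorr p (fun _ => ()) X Y

/-- Shannon entropy (base 2) of the random variable `X` under `p`. -/
def ent {𝒳 : Type} [Fintype 𝒳] (p : Ω → ℝ) (X : Ω → 𝒳) : ℝ :=
  ∑ x, -(marg p X x * Real.logb 2 (marg p X x))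

/-- Conditional Shannon entropy `H(X | U)`. -/
def condEnt {𝒳 𝒰 : Type} [Fintype 𝒳] [Fintype 𝒰] (p : Ω → ℝ) (X : Ω → 𝒳) (U : Ω → 𝒰) : ℝ :=
  ent p (fun ω => (X ω, U ω)) - ent p U

/-- Mutual information `I(X; U)`. -/
def mutInfo {𝒳 𝒰 : Type} [Fintype 𝒳] [Fintype 𝒰] (p : Ω → ℝ) (X : Ω → 𝒳) (U : Ω → 𝒰) : ℝ :=
  ent p X + ent p U - ent p fun ω => (X ω, U ω)

/-- Almost-sure equality of two discrete random variables. -/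
def AEEq {𝒱 : Type} (p : Ω → ℝ) (f g : Ω → 𝒱) : Prop := ∀ ω, 0 < p ω → f ω = g ω

/-- The Gács–Körner common information `C_GK(X;Y)`. -/
def CGK {𝒳 𝒴 : Type} (p : Ω → ℝ) (X : Ω → 𝒳) (Y : Ω → 𝒴) : ℝ :=
  sSup { r | ∃ (𝒱 : FinAlph) (f : 𝒳 → 𝒱) (g : 𝒴 → 𝒱),
    AEEq p (fun ω => f (X ω)) (fun ω => g (Y ω)) ∧ r = ent p fun ω => f (X ω) }

/-- The conditional Gács–Körner common information `C_GK(X;Y|U)`. -/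
def CGKcond {𝒳 𝒴 𝒰 : Type} [Fintype 𝒰] (p : Ω → ℝ) (X : Ω → 𝒳) (Y : Ω → 𝒴)
    (U : Ω → 𝒰) : ℝ :=
  sSup { r | ∃ (𝒱 : FinAlph) (f : 𝒳 × 𝒰 → 𝒱) (g : 𝒴 × 𝒰 → 𝒱),
    AEEq p (fun ω => f (X ω, U ω)) (fun ω => g (Y ω, U ω)) ∧
    r = condEnt p (fun ω => f (X ω, U ω)) U }

/-- The `β`-approximate common information (approximate information-correlation function). -/
def Cbeta {𝒳 𝒴 : Type} [Fintype 𝒳] [Fintype 𝒴] (p : 𝒳 × 𝒴 → ℝ) (β : ℝ) : ℝ :=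
  sInf { r | ∃ (𝒰 : FinAlph) (q : (𝒳 × 𝒴) × 𝒰 → ℝ),
    IsPMF q ∧ (∀ a, marg q Prod.fst a = p a) ∧
    maxCorr q Prod.snd (fun a => a.1.1) (fun a => a.1.2) ≤ β ∧
    r = mutInfo q Prod.fst Prod.snd }

/-- The `n`-th term in the definition of the `β`-exact common information:
the normalized smallest entropy of an auxiliary variable for `n` i.i.d. copies. -/
def KbetaN {𝒳 𝒴 : Type} [Fintype 𝒳] [Fintype 𝒴] (p : 𝒳 × 𝒴 → ℝ) (β : ℝ) (n : ℕ) : ℝ :=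
  sInf { r | ∃ (𝒰 : FinAlph) (q : ((Fin n → 𝒳) × (Fin n → 𝒴)) × 𝒰 → ℝ),
    IsPMF q ∧
    (∀ a : (Fin n → 𝒳) × (Fin n → 𝒴), marg q Prod.fst a = ∏ i, p (a.1 i, a.2 i)) ∧
    maxCorr q Prod.snd (fun a => a.1.1) (fun a => a.1.2) ≤ β ∧
    r = (1 / (n : ℝ)) * ent q Prod.snd }

/-- The `β`-exact common information (exact information-correlation function). -/
def Kbeta {𝒳 𝒴 : Type} [Fintype 𝒳] [Fintype 𝒴] (p : 𝒳 × 𝒴 → ℝ) (β : ℝ) : ℝ :=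
  Filter.limUnder Filter.atTop fun n => KbetaN p β n

/-!
Let `W` be the connected component of `X` in the bipartite graph of pairs `(x, y)` of positive
probability. Any `f(X) = g(Y)` is constant along edges, hence a function of `W`, so
`C_GK(X;Y) = H(W)`. Taking `U = W` gives `C_GK(X;Y|U) = 0` and `I(X,Y;U) = H(W)`. Conversely,
`W` stays a common function of `X` and `Y` under any coupling with the same law of `(X,Y)`, so
`C_GK(X;Y|U) = 0` forces `H(W|U) = 0`, and data processing (submodularity of entropy) gives
`I(X,Y;U) ≥ I(W;U) = H(W) - H(W|U) = H(W)`.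
-/

section Entropy

variable {𝒳 𝒴 𝒵 𝒰 : Type} {p : Ω → ℝ}

lemma IsPMF.nonempty (hp : IsPMF p) : Nonempty Ω := by
  by_contra h
  rw [not_nonempty_iff] at h
  simpa using hp.2

lemma marg_nonneg (hp : ∀ ω, 0 ≤ p ω) (X : Ω → 𝒳) (x : 𝒳) : 0 ≤ marg p X x :=
  Finset.sum_nonneg fun ω _ => by split_ifs <;> simp [hp ω]

lemma le_marg_apply (hp : ∀ ω, 0 ≤ p ω) (X : Ω → 𝒳) (ω : Ω) : p ω ≤ marg p X (X ω) := by
  have := Finset.single_le_sum (f := fun ω' => if X ω' = X ω then p ω' else 0)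
    (fun ω' _ => by split_ifs <;> simp [hp ω']) (Finset.mem_univ ω)
  simpa [marg] using this

lemma exists_of_marg_pos {X : Ω → 𝒳} {x : 𝒳} (h : 0 < marg p X x) : ∃ ω, X ω = x ∧ 0 < p ω := by
  by_contra! h'
  refine h.not_ge (Finset.sum_nonpos fun ω _ => ?_)
  split_ifs with hω
  exacts [h' ω hω, le_rfl]

lemma sum_mul_comp_eq_sum_marg_mul [Fintype 𝒳] (X : Ω → 𝒳) (F : 𝒳 → ℝ) :
    ∑ ω, p ω * F (X ω) = ∑ x, marg p X x * F x := by
  simp only [marg, Finset.sum_mul, ite_mul, zero_mul]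
  rw [Finset.sum_comm]
  simp

lemma sum_marg [Fintype 𝒳] (X : Ω → 𝒳) : ∑ x, marg p X x = ∑ ω, p ω := by
  simpa using (sum_mul_comp_eq_sum_marg_mul (p := p) X fun _ => 1).symm

lemma isPMF_marg [Fintype 𝒳] (hp : IsPMF p) (X : Ω → 𝒳) : IsPMF (marg p X) :=
  ⟨marg_nonneg hp.1 X, by rw [sum_marg, hp.2]⟩

lemma marg_id (x : Ω) : marg p (fun ω => ω) x = p x := by
  simp [marg]

lemma marg_comp [Fintype 𝒳] (X : Ω → 𝒳) (k : 𝒳 → 𝒰) (u : 𝒰) :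
    marg p (fun ω => k (X ω)) u = marg (marg p X) k u := by
  simpa [marg] using sum_mul_comp_eq_sum_marg_mul (p := p) X fun x => if k x = u then 1 else 0

lemma marg_le_marg_comp (hp : ∀ ω, 0 ≤ p ω) (X : Ω → 𝒳) (k : 𝒳 → 𝒰) (x : 𝒳) :
    marg p X x ≤ marg p (fun ω => k (X ω)) (k x) :=
  Finset.sum_le_sum fun ω _ => by
    split_ifs <;> simp_all

lemma marg_comp_apply_of_injective (X : Ω → 𝒳) {e : 𝒳 → 𝒰} (he : e.Injective) (x : 𝒳) :
    marg p (fun ω => e (X ω)) (e x) = marg p X x := by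
  simp [marg, he.eq_iff]

lemma marg_congr (hp : ∀ ω, 0 ≤ p ω) {X X' : Ω → 𝒳} (h : AEEq p X X') : marg p X = marg p X' := by
  funext x
  refine Finset.sum_congr rfl fun ω _ => ?_
  rcases (hp ω).lt_or_eq with hω | hω
  · rw [h ω hω]
  · simp [← hω]

variable [Fintype 𝒳] [Fintype 𝒴] [Fintype 𝒵] [Fintype 𝒰]

lemma marg_snd_apply (m : 𝒳 × 𝒰 → ℝ) (u : 𝒰) : marg m Prod.snd u = ∑ x, m (x, u) := by
  simp [marg, Fintype.sum_prod_type]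

lemma ent_eq_neg_sum (X : Ω → 𝒳) : ent p X = -∑ ω, p ω * Real.logb 2 (marg p X (X ω)) := by
  rw [sum_mul_comp_eq_sum_marg_mul X fun x => Real.logb 2 (marg p X x), ent,
    Finset.sum_neg_distrib]

lemma ent_comp (X : Ω → 𝒳) (k : 𝒳 → 𝒰) : ent p (fun ω => k (X ω)) = ent (marg p X) k := by
  simp only [ent, marg_comp]

lemma ent_congr (hp : ∀ ω, 0 ≤ p ω) {X X' : Ω → 𝒳} (h : AEEq p X X') : ent p X = ent p X' := by
  rw [ent, ent, marg_congr hp h]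

lemma ent_comp_of_injective (X : Ω → 𝒳) {e : 𝒳 → 𝒰} (he : e.Injective) :
    ent p (fun ω => e (X ω)) = ent p X := by
  simp only [ent_eq_neg_sum, marg_comp_apply_of_injective X he]

lemma ent_le_ent_pair (hp : ∀ ω, 0 ≤ p ω) (X : Ω → 𝒳) (U : Ω → 𝒰) :
    ent p U ≤ ent p (fun ω => (X ω, U ω)) := by
  rw [ent_eq_neg_sum, ent_eq_neg_sum, neg_le_neg_iff]
  refine Finset.sum_le_sum fun ω _ => ?_
  rcases (hp ω).lt_or_eq with hω | hω
  · refine mul_le_mul_of_nonneg_left (Real.logb_le_logb_of_le one_lt_two ?_ ?_) hω.le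
    · exact hω.trans_le (le_marg_apply hp _ ω)
    · exact marg_le_marg_comp hp (fun ω => (X ω, U ω)) Prod.snd (X ω, U ω)
  · simp [← hω]

lemma ent_pair_comp_self (X : Ω → 𝒳) (k : 𝒳 → 𝒰) : ent p (fun ω => (X ω, k (X ω))) = ent p X :=
  ent_comp_of_injective X (e := fun x => (x, k x)) fun _ _ h => congrArg Prod.fst h

lemma ent_comp_le (hp : ∀ ω, 0 ≤ p ω) (X : Ω → 𝒳) (k : 𝒳 → 𝒰) :
    ent p (fun ω => k (X ω)) ≤ ent p X :=
  (ent_le_ent_pair hp X _).trans_eq (ent_pair_comp_self X k)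

lemma condEnt_nonneg (hp : ∀ ω, 0 ≤ p ω) (X : Ω → 𝒳) (U : Ω → 𝒰) : 0 ≤ condEnt p X U :=
  sub_nonneg.2 (ent_le_ent_pair hp X U)

lemma condEnt_congr (hp : ∀ ω, 0 ≤ p ω) {X X' : Ω → 𝒳} (h : AEEq p X X') (U : Ω → 𝒰) :
    condEnt p X U = condEnt p X' U := by
  rw [condEnt, condEnt, ent_congr hp fun ω hω => by rw [h ω hω]]

lemma condEnt_comp_self (U : Ω → 𝒰) (k : 𝒰 → 𝒳) : condEnt p (fun ω => k (U ω)) U = 0 :=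
  sub_eq_zero.2 <| ent_comp_of_injective U (e := fun u => (k u, u)) fun _ _ h => congrArg Prod.snd h

lemma sum_mul_logb_le_sum_mul_logb {P Q : 𝒳 → ℝ} (hP : ∀ x, 0 ≤ P x) (hQ : ∀ x, 0 ≤ Q x)
    (hPQ : ∀ x, 0 < P x → 0 < Q x) (hsum : ∑ x, Q x ≤ ∑ x, P x) :
    ∑ x, P x * Real.logb 2 (Q x) ≤ ∑ x, P x * Real.logb 2 (P x) := by
  have hlog2 : 0 < Real.log 2 := Real.log_pos one_lt_two
  have key : ∀ x,
      P x * Real.logb 2 (Q x) ≤ P x * Real.logb 2 (P x) + (Q x - P x) / Real.log 2 := by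
    intro x
    rcases (hP x).lt_or_eq with hx | hx
    · have hQx := hPQ x hx
      have hratio := Real.log_le_sub_one_of_pos (div_pos hQx hx)
      rw [Real.log_div hQx.ne' hx.ne'] at hratio
      have h : P x * Real.log (Q x) ≤ P x * Real.log (P x) + (Q x - P x) := by
        have := mul_le_mul_of_nonneg_left hratio hx.le
        rw [mul_sub, mul_sub, mul_div_cancel₀ _ hx.ne'] at this
        linarith
      simp only [Real.logb]
      rw [← mul_div_assoc, ← mul_div_assoc, ← add_div]
      exact div_le_div_of_nonneg_right h hlog2.le
    · simp [← hx, div_nonneg (hQ x) hlog2.le]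
  calc ∑ x, P x * Real.logb 2 (Q x)
      ≤ ∑ x, (P x * Real.logb 2 (P x) + (Q x - P x) / Real.log 2) :=
        Finset.sum_le_sum fun x _ => key x
    _ = ∑ x, P x * Real.logb 2 (P x) + (∑ x, Q x - ∑ x, P x) / Real.log 2 := by
        rw [Finset.sum_add_distrib, ← Finset.sum_div, Finset.sum_sub_distrib]
    _ ≤ ∑ x, P x * Real.logb 2 (P x) :=
        add_le_of_nonpos_right (div_nonpos_of_nonpos_of_nonneg (sub_nonpos.2 hsum) hlog2.le)

lemma ent_submodular_prod {m : (𝒳 × 𝒴) × 𝒵 → ℝ} (hm : IsPMF m) :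
    ent m (fun t => t) + ent m Prod.snd ≤
      ent m (fun t => (t.1.1, t.2)) + ent m (fun t => (t.1.2, t.2)) := by
  simp only [ent_eq_neg_sum, marg_id]
  set a := marg m fun t => (t.1.1, t.2)
  set b := marg m fun t => (t.1.2, t.2)
  set c := marg m Prod.snd
  have hpos : ∀ t, 0 < m t → 0 < a (t.1.1, t.2) ∧ 0 < b (t.1.2, t.2) ∧ 0 < c t.2 := fun t ht =>
    ⟨ht.trans_le (le_marg_apply hm.1 _ t), ht.trans_le (le_marg_apply hm.1 _ t),
      ht.trans_le (le_marg_apply hm.1 _ t)⟩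
  have ha_sum : ∀ z, ∑ x, a (x, z) = c z := fun z =>
    (marg_snd_apply a z).symm.trans (marg_comp (p := m) _ Prod.snd z).symm
  have hb_sum : ∀ z, ∑ y, b (y, z) = c z := fun z =>
    (marg_snd_apply b z).symm.trans (marg_comp (p := m) _ Prod.snd z).symm
  -- Gibbs' inequality against the law under which `X` and `Y` are independent given `Z`
  set Q : (𝒳 × 𝒴) × 𝒵 → ℝ := fun t => a (t.1.1, t.2) * b (t.1.2, t.2) / c t.2
  have hQ : ∀ t, 0 ≤ Q t := fun t => by
    have := marg_nonneg hm.1 (fun t => (t.1.1, t.2)) (t.1.1, t.2)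
    have := marg_nonneg hm.1 (fun t => (t.1.2, t.2)) (t.1.2, t.2)
    have := marg_nonneg hm.1 Prod.snd t.2
    positivity
  have hQsum : ∑ t, Q t = ∑ t, m t := by
    calc ∑ t, Q t = ∑ z, (∑ x, a (x, z)) * (∑ y, b (y, z)) / c z := by
          rw [Fintype.sum_prod_type_right]
          simp only [Q, Fintype.sum_prod_type, Fintype.sum_mul_sum, Finset.sum_div]
      _ = ∑ z, c z := by simp only [ha_sum, hb_sum, mul_self_div_self]
      _ = ∑ t, m t := sum_marg Prod.snd
  have hgibbs := sum_mul_logb_le_sum_mul_logb hm.1 hQ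
    (fun t ht => by obtain ⟨ha, hb, hc⟩ := hpos t ht; positivity) hQsum.le
  have hsplit : ∑ t, m t * Real.logb 2 (Q t) = ∑ t, m t * Real.logb 2 (a (t.1.1, t.2)) +
      ∑ t, m t * Real.logb 2 (b (t.1.2, t.2)) - ∑ t, m t * Real.logb 2 (c t.2) := by
    rw [← Finset.sum_add_distrib, ← Finset.sum_sub_distrib]
    refine Finset.sum_congr rfl fun t _ => ?_
    rcases (hm.1 t).lt_or_eq with ht | ht
    · obtain ⟨ha, hb, hc⟩ := hpos t ht
      rw [Real.logb_div (by positivity) hc.ne', Real.logb_mul ha.ne' hb.ne']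
      ring
    · simp [← ht]
  linarith

lemma ent_submodular (hp : IsPMF p) (X : Ω → 𝒳) (Y : Ω → 𝒴) (Z : Ω → 𝒵) :
    ent p (fun ω => ((X ω, Y ω), Z ω)) + ent p Z ≤
      ent p (fun ω => (X ω, Z ω)) + ent p (fun ω => (Y ω, Z ω)) := by
  simpa only [← ent_comp] using ent_submodular_prod (isPMF_marg hp fun ω => ((X ω, Y ω), Z ω))

lemma mutInfo_comp_le (hp : IsPMF p) (X : Ω → 𝒳) (U : Ω → 𝒰) (k : 𝒳 → 𝒵) :
    mutInfo p (fun ω => k (X ω)) U ≤ mutInfo p X U := by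
  have h := ent_submodular hp X U fun ω => k (X ω)
  rw [ent_pair_comp_self (fun ω => (X ω, U ω)) fun xu => k xu.1, ent_pair_comp_self X k,
    ← ent_comp_of_injective (fun ω => (U ω, k (X ω))) Prod.swap_injective] at h
  simp only [mutInfo, Prod.swap_prod_mk] at h ⊢
  linarith

end Entropy

section GacsKorner

variable {𝒳 𝒴 𝒰 𝒲 : Type}

lemma condEnt_le_CGKcond [Fintype 𝒰] {p : Ω → ℝ} (hp : ∀ ω, 0 ≤ p ω) {X : Ω → 𝒳} {Y : Ω → 𝒴}
    {U : Ω → 𝒰} {𝒱 : FinAlph} {f : 𝒳 × 𝒰 → 𝒱} {g : 𝒴 × 𝒰 → 𝒱}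
    (hfg : AEEq p (fun ω => f (X ω, U ω)) (fun ω => g (Y ω, U ω))) :
    condEnt p (fun ω => f (X ω, U ω)) U ≤ CGKcond p X Y U := by
  refine le_csSup ⟨ent p (fun ω => ω) - ent p U, ?_⟩ ⟨𝒱, f, g, hfg, rfl⟩
  rintro r ⟨𝒱', f', g', -, rfl⟩
  exact sub_le_sub_right (ent_comp_le hp (fun ω => ω) fun ω => (f' (X ω, U ω), U ω)) _

lemma CGKcond_eq_zero [Fintype 𝒰] {p : Ω → ℝ} {X : Ω → 𝒳} {Y : Ω → 𝒴} {U : Ω → 𝒰}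
    (h : ∀ (𝒱 : FinAlph) (f : 𝒳 × 𝒰 → 𝒱) (g : 𝒴 × 𝒰 → 𝒱),
      AEEq p (fun ω => f (X ω, U ω)) (fun ω => g (Y ω, U ω)) →
        condEnt p (fun ω => f (X ω, U ω)) U = 0) :
    CGKcond p X Y U = 0 := by
  refine (congrArg sSup ?_).trans (csSup_singleton 0)
  ext r
  constructor
  · rintro ⟨𝒱, f, g, hfg, rfl⟩
    exact h 𝒱 f g hfg
  · rintro rfl
    exact ⟨⟨Unit⟩, fun _ => (), fun _ => (), fun _ _ => rfl,
      (condEnt_comp_self (p := p) U fun _ => ()).symm⟩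

lemma marg_fst_marg_graph [Fintype 𝒲] (p : Ω → ℝ) (W : Ω → 𝒲) :
    marg (marg p fun ω => (ω, W ω)) Prod.fst = p :=
  funext fun ω => by rw [← marg_comp]; exact marg_id ω

lemma mutInfo_marg_graph [Fintype 𝒲] (p : Ω → ℝ) (W : Ω → 𝒲) :
    mutInfo (marg p fun ω => (ω, W ω)) Prod.fst Prod.snd = ent p W := by
  have hfst : ent (marg p fun ω => (ω, W ω)) Prod.fst = ent p fun ω => ω := (ent_comp _ _).symm
  have hsnd : ent (marg p fun ω => (ω, W ω)) Prod.snd = ent p W := (ent_comp _ _).symm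
  have hpair : ent (marg p fun ω => (ω, W ω)) (fun a => (a.1, a.2)) = ent p fun ω => ω :=
    (ent_comp _ _).symm.trans (ent_pair_comp_self (fun ω => ω) W)
  rw [mutInfo, hfst, hsnd, hpair]
  ring

def Linked (p : 𝒳 × 𝒴 → ℝ) (x x' : 𝒳) : Prop := ∃ y, 0 < p (x, y) ∧ 0 < p (x', y)

/-- The connected components of the bipartite graph on `𝒳 ⊕ 𝒴` whose edges are the pairs of
positive probability, each labelled by its vertices in `𝒳`. -/
def CommonPart (p : 𝒳 × 𝒴 → ℝ) : Type := Quot (Linked p)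

instance [Finite 𝒳] (p : 𝒳 × 𝒴 → ℝ) : Fintype (CommonPart p) :=
  @Fintype.ofFinite (Quot (Linked p)) inferInstance

def commonPart (p : 𝒳 × 𝒴 → ℝ) : 𝒳 → CommonPart p := Quot.mk _

def commonPartOfSnd (p : 𝒳 × 𝒴 → ℝ) [Nonempty 𝒳] (y : 𝒴) : CommonPart p :=
  commonPart p (Classical.epsilon fun x => 0 < p (x, y))

variable {p : 𝒳 × 𝒴 → ℝ}

lemma commonPart_eq_of_linked {x x' : 𝒳} (h : Linked p x x') : commonPart p x = commonPart p x' :=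
  Quot.sound h

lemma commonPart_eq_commonPartOfSnd [Nonempty 𝒳] {x : 𝒳} {y : 𝒴} (h : 0 < p (x, y)) :
    commonPart p x = commonPartOfSnd p y :=
  commonPart_eq_of_linked ⟨y, h, Classical.epsilon_spec (p := fun x => 0 < p (x, y)) ⟨x, h⟩⟩

lemma aeEq_commonPart [Nonempty 𝒳] {α : Type} {r : α → ℝ} {X : α → 𝒳} {Y : α → 𝒴}
    (h : ∀ ω, 0 < r ω → 0 < p (X ω, Y ω)) :
    AEEq r (fun ω => commonPart p (X ω)) (fun ω => commonPartOfSnd p (Y ω)) :=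
  fun ω hω => commonPart_eq_commonPartOfSnd (h ω hω)

lemma exists_eq_comp_commonPart {𝒱 : Type} {f : 𝒳 → 𝒱} (hf : ∀ x x', Linked p x x' → f x = f x') :
    ∃ φ : CommonPart p → 𝒱, ∀ x, f x = φ (commonPart p x) :=
  ⟨Quot.lift f hf, fun _ => rfl⟩

variable [Fintype 𝒳] [Fintype 𝒴]

lemma CGK_eq_ent_commonPart [Nonempty 𝒳] (hp : ∀ a, 0 ≤ p a) :
    CGK p Prod.fst Prod.snd = ent p fun a => commonPart p a.1 := by
  refine IsGreatest.csSup_eq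
    ⟨⟨⟨CommonPart p⟩, commonPart p, commonPartOfSnd p, aeEq_commonPart fun _ h => h, rfl⟩, ?_⟩
  rintro r ⟨𝒱, f, g, hfg, rfl⟩
  obtain ⟨φ, hφ⟩ := exists_eq_comp_commonPart (p := p) (f := f) fun x x' ⟨y, hx, hx'⟩ =>
    (hfg (x, y) hx).trans (hfg (x', y) hx').symm
  simp only [hφ]
  exact ent_comp_le hp _ φ

lemma CGKcond_marg_graph_commonPart (hp : ∀ a, 0 ≤ p a) :
    CGKcond (marg p fun a => (a, commonPart p a.1)) (fun t => t.1.1) (fun t => t.1.2)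
      Prod.snd = 0 := by
  set q := marg p fun a => (a, commonPart p a.1)
  have hsupp : ∀ t, 0 < q t → t.2 = commonPart p t.1.1 := fun t ht => by
    obtain ⟨a, rfl, -⟩ := exists_of_marg_pos ht
    rfl
  refine CGKcond_eq_zero fun 𝒱 f g hfg => ?_
  have hlinked : ∀ x x', Linked p x x' → f (x, commonPart p x) = f (x', commonPart p x') := by
    rintro x x' ⟨y, hx, hx'⟩
    have hfg' : ∀ x, 0 < p (x, y) → f (x, commonPart p x) = g (y, commonPart p x) :=
      fun x h => hfg ((x, y), commonPart p x) (h.trans_le (le_marg_apply hp _ (x, y)))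
    rw [hfg' x hx, hfg' x' hx', commonPart_eq_of_linked ⟨y, hx, hx'⟩]
  obtain ⟨φ, hφ⟩ := exists_eq_comp_commonPart hlinked
  rw [condEnt_congr (marg_nonneg hp _) (X' := fun t => φ t.2) fun t ht => by
    show f (t.1.1, t.2) = φ t.2
    rw [hsupp t ht]
    exact hφ _]
  exact condEnt_comp_self Prod.snd φ

lemma ent_commonPart_le_mutInfo [Nonempty 𝒳] [Fintype 𝒰] {q : (𝒳 × 𝒴) × 𝒰 → ℝ} (hq : IsPMF q)
    (hmarg : ∀ a, marg q Prod.fst a = p a)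
    (hcond : CGKcond q (fun t => t.1.1) (fun t => t.1.2) Prod.snd = 0) :
    (ent p fun a => commonPart p a.1) ≤ mutInfo q Prod.fst Prod.snd := by
  have hqp : ∀ t, 0 < q t → 0 < p t.1 := fun t ht => by
    simpa only [hmarg] using ht.trans_le (le_marg_apply hq.1 Prod.fst t)
  have hW : condEnt q (fun t => commonPart p t.1.1) Prod.snd = 0 :=
    le_antisymm ((condEnt_le_CGKcond hq.1 (U := Prod.snd) (𝒱 := ⟨CommonPart p⟩)
      (f := fun xu => commonPart p xu.1) (g := fun yu => commonPartOfSnd p yu.1)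
      (aeEq_commonPart hqp)).trans_eq hcond) (condEnt_nonneg hq.1 _ _)
  have hm : marg q Prod.fst = p := funext hmarg
  calc (ent p fun a => commonPart p a.1) = ent q fun t => commonPart p t.1.1 := by
        rw [ent_comp (p := q) Prod.fst fun a => commonPart p a.1, hm]
    _ = mutInfo q (fun t => commonPart p t.1.1) Prod.snd := by
        rw [condEnt] at hW
        rw [mutInfo]
        linarith
    _ ≤ mutInfo q Prod.fst Prod.snd :=
        mutInfo_comp_le hq Prod.fst Prod.snd fun a => commonPart p a.1

end GacsKorner

/-- The Gács–Körner common information equals the infimum of `I(X,Y;U)`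
over all finite-alphabet auxiliary random variables `U` jointly distributed with `(X,Y)`
such that the conditional Gács–Körner common information `C_GK(X;Y|U)` vanishes. -/
theorem gacsKorner_eq_inf_mutInfo {𝒳 𝒴 : Type} [Fintype 𝒳] [Fintype 𝒴]
    (p : 𝒳 × 𝒴 → ℝ) (hp : IsPMF p) :
    CGK p Prod.fst Prod.snd =
      sInf { r | ∃ (𝒰 : FinAlph) (q : (𝒳 × 𝒴) × 𝒰 → ℝ),
        IsPMF q ∧ (∀ a, marg q Prod.fst a = p a) ∧
        CGKcond q (fun a => a.1.1) (fun a => a.1.2) Prod.snd = 0 ∧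
        r = mutInfo q Prod.fst Prod.snd } := by
  have : Nonempty 𝒳 := hp.nonempty.map Prod.fst
  rw [CGK_eq_ent_commonPart hp.1, eq_comm]
  refine IsLeast.csInf_eq ⟨?_, ?_⟩
  · exact ⟨⟨CommonPart p⟩, marg p fun a => (a, commonPart p a.1), isPMF_marg hp _,
      congrFun (marg_fst_marg_graph p _), CGKcond_marg_graph_commonPart hp.1,
      (mutInfo_marg_graph p _).symm⟩
  · rintro r ⟨𝒰, q, hq, hmarg, hcond, rfl⟩
    exact ent_commonPart_le_mutInfo hq hmarg hcond

end GCI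
end
end

section
/- Fix a finite alphabet 𝒰 and a conditional distribution P_{XY|U} from 𝒰 to a finite alphabet 𝒳×𝒴. Then the map P_U ↦ ρ_m(X;Y|U), sending a pmf P_U on 𝒰 to the conditional maximal correlation of X and Y given U under the joint law P_U·P_{XY|U}, is concave. In fact, for any pmfs P_U, Q_U on 𝒰 and λ ∈ (0,1), the conditional maximal correlation under the mixture λP_U + (1−λ)Q_U equals the maximum of the conditional maximal correlations under P_U and under Q_U. -/
open scoped BigOperators Classical

noncomputable section

namespace GCI

variable {Ω : Type} [Fintype Ω]

/-- The joint pmf on `(𝒳 × 𝒴) × 𝒰` determined by a pmf `pU` on `𝒰`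
and a conditional distribution `W` from `𝒰` to `𝒳 × 𝒴`. -/
def jointOf {𝒳 𝒴 𝒰 : Type} (pU : 𝒰 → ℝ) (W : 𝒰 → 𝒳 × 𝒴 → ℝ) :
    (𝒳 × 𝒴) × 𝒰 → ℝ :=
  fun a => pU a.2 * W a.2 a.1

/-!
Given `U = u`, the conditional covariance of `F` and `G` is computed from the kernel `W u` alone,
and `E[cov(F, G | U)]` under `P_U · W` is its `P_U`-average. Localizing test functions at a
single `u` (zero elsewhere) shows that `ρ_m(X;Y|U)` bounds every conditional correlation
`cov(F, G | U = u) / √(var(F | U = u) var(G | U = u))` with `P_U(u) > 0`; conversely, by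
Cauchy–Schwarz in `u`, any such uniform bound on the support bounds `ρ_m(X;Y|U)`. Hence
`ρ_m(X;Y|U)` depends only on the support of `P_U`, is monotone in it, and the support of a
proper mixture is the union of the supports.
-/

lemma ccorr_le_of_ccov_le {𝒰 : Type} {p : Ω → ℝ} {U : Ω → 𝒰} {f g : Ω → ℝ} {ρ : ℝ}
    (hρ : 0 ≤ ρ) (h : ccov p U f g ≤ ρ * (√(cvar p U f) * √(cvar p U g))) :
    ccorr p U f g ≤ ρ := by
  unfold ccorr
  split_ifs
  · rcases (mul_nonneg (Real.sqrt_nonneg (cvar p U f))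
      (Real.sqrt_nonneg (cvar p U g))).eq_or_lt with h0 | h0
    · rwa [← h0, div_zero]
    · exact (div_le_iff₀ h0).2 h
  · exact hρ

lemma sqrt_mul_mul_sqrt_mul {c : ℝ} (hc : 0 ≤ c) (a b : ℝ) :
    √(c * a) * √(c * b) = c * (√a * √b) := by
  rw [Real.sqrt_mul hc, Real.sqrt_mul hc, mul_mul_mul_comm, Real.mul_self_sqrt hc]

variable {𝒳 𝒴 𝒰 : Type} [Fintype 𝒳] [Fintype 𝒴]

def condMean (W : 𝒰 → 𝒳 × 𝒴 → ℝ) (F : (𝒳 × 𝒴) × 𝒰 → ℝ) (u : 𝒰) : ℝ :=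
  ∑ a, W u a * F (a, u)

def condCov (W : 𝒰 → 𝒳 × 𝒴 → ℝ) (F G : (𝒳 × 𝒴) × 𝒰 → ℝ) (u : 𝒰) : ℝ :=
  ∑ a, W u a * ((F (a, u) - condMean W F u) * (G (a, u) - condMean W G u))

def liftX (f : 𝒳 × 𝒰 → ℝ) : (𝒳 × 𝒴) × 𝒰 → ℝ := fun ω => f (ω.1.1, ω.2)

def liftY (g : 𝒴 × 𝒰 → ℝ) : (𝒳 × 𝒴) × 𝒰 → ℝ := fun ω => g (ω.1.2, ω.2)

variable {W : 𝒰 → 𝒳 × 𝒴 → ℝ}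

lemma condCov_self_nonneg (hW0 : ∀ u a, 0 ≤ W u a) (F : (𝒳 × 𝒴) × 𝒰 → ℝ) (u : 𝒰) :
    0 ≤ condCov W F F u :=
  Finset.sum_nonneg fun a _ => mul_nonneg (hW0 u a) (mul_self_nonneg _)

lemma condCov_le_sqrt_mul_sqrt (hW0 : ∀ u a, 0 ≤ W u a) (F G : (𝒳 × 𝒴) × 𝒰 → ℝ) (u : 𝒰) :
    condCov W F G u ≤ √(condCov W F F u) * √(condCov W G G u) := by
  have hsq : condCov W F G u ^ 2 ≤ condCov W F F u * condCov W G G u :=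
    Finset.sum_sq_le_sum_mul_sum_of_sq_le_mul _
      (fun a _ => mul_nonneg (hW0 u a) (mul_self_nonneg _))
      (fun a _ => mul_nonneg (hW0 u a) (mul_self_nonneg _))
      (fun a _ => le_of_eq (by ring))
  rw [← Real.sqrt_mul (condCov_self_nonneg hW0 F u)]
  exact (le_abs_self _).trans (Real.abs_le_sqrt hsq)

lemma condCov_restrict (F G : (𝒳 × 𝒴) × 𝒰 → ℝ) (u₀ u : 𝒰) :
    condCov W (fun ω => if ω.2 = u₀ then F ω else 0) (fun ω => if ω.2 = u₀ then G ω else 0) u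
      = if u = u₀ then condCov W F G u₀ else 0 := by
  by_cases hu : u = u₀
  · subst hu; simp [condCov, condMean]
  · simp [condCov, condMean, hu]

variable [Fintype 𝒰]

lemma marg_jointOf (hW1 : ∀ u, ∑ a, W u a = 1) (pU : 𝒰 → ℝ) (u : 𝒰) :
    marg (jointOf pU W) Prod.snd u = pU u := by
  simp [marg, jointOf, Fintype.sum_prod_type, ← Finset.mul_sum, hW1]

lemma cexp_jointOf (hW1 : ∀ u, ∑ a, W u a = 1) {pU : 𝒰 → ℝ} {u : 𝒰} (hu : pU u ≠ 0)
    (F : (𝒳 × 𝒴) × 𝒰 → ℝ) :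
    cexp (jointOf pU W) Prod.snd u F = condMean W F u := by
  rw [cexp, marg_jointOf hW1, div_eq_iff hu]
  simp only [jointOf, Fintype.sum_prod_type, Finset.sum_ite_eq', Finset.mem_univ, if_true,
    condMean, Finset.sum_mul]
  exact Finset.sum_congr rfl fun _ _ => Finset.sum_congr rfl fun _ _ => by ring

lemma ccov_jointOf (hW1 : ∀ u, ∑ a, W u a = 1) (pU : 𝒰 → ℝ) (F G : (𝒳 × 𝒴) × 𝒰 → ℝ) :
    ccov (jointOf pU W) Prod.snd F G = ∑ u, pU u * condCov W F G u := by
  rw [ccov, expec, Fintype.sum_prod_type, Finset.sum_comm]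
  refine Finset.sum_congr rfl fun u _ => ?_
  by_cases hu : pU u = 0
  · simp [jointOf, hu]
  · simp only [jointOf, cexp_jointOf hW1 hu, condCov, Finset.mul_sum, mul_assoc]

lemma ccorr_jointOf_le (hW0 : ∀ u a, 0 ≤ W u a) (hW1 : ∀ u, ∑ a, W u a = 1)
    {pU : 𝒰 → ℝ} (hp : ∀ u, 0 ≤ pU u) {F G : (𝒳 × 𝒴) × 𝒰 → ℝ} {ρ : ℝ} (hρ : 0 ≤ ρ)
    (h : ∀ u, pU u ≠ 0 →
      condCov W F G u ≤ ρ * (√(condCov W F F u) * √(condCov W G G u))) :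
    ccorr (jointOf pU W) Prod.snd F G ≤ ρ := by
  refine ccorr_le_of_ccov_le hρ ?_
  rw [cvar, cvar, ccov_jointOf hW1, ccov_jointOf hW1, ccov_jointOf hW1]
  calc ∑ u, pU u * condCov W F G u
      ≤ ∑ u, pU u * (ρ * (√(condCov W F F u) * √(condCov W G G u))) := by
        refine Finset.sum_le_sum fun u _ => ?_
        by_cases hu : pU u = 0
        · simp [hu]
        · exact mul_le_mul_of_nonneg_left (h u hu) (hp u)
    _ = ρ * ∑ u, √(pU u * condCov W F F u) * √(pU u * condCov W G G u) := by
        simp only [sqrt_mul_mul_sqrt_mul (hp _), Finset.mul_sum]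
        exact Finset.sum_congr rfl fun u _ => by ring
    _ ≤ ρ * (√(∑ u, pU u * condCov W F F u) * √(∑ u, pU u * condCov W G G u)) :=
        mul_le_mul_of_nonneg_left (Real.sum_sqrt_mul_sqrt_le _
          (fun u => mul_nonneg (hp u) (condCov_self_nonneg hW0 F u))
          (fun u => mul_nonneg (hp u) (condCov_self_nonneg hW0 G u))) hρ

lemma ccorr_jointOf_le_one (hW0 : ∀ u a, 0 ≤ W u a) (hW1 : ∀ u, ∑ a, W u a = 1)
    {pU : 𝒰 → ℝ} (hp : ∀ u, 0 ≤ pU u) (F G : (𝒳 × 𝒴) × 𝒰 → ℝ) :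
    ccorr (jointOf pU W) Prod.snd F G ≤ 1 :=
  ccorr_jointOf_le hW0 hW1 hp zero_le_one fun u _ => by
    rw [one_mul]; exact condCov_le_sqrt_mul_sqrt hW0 F G u

def maxCorrOf (W : 𝒰 → 𝒳 × 𝒴 → ℝ) (pU : 𝒰 → ℝ) : ℝ :=
  maxCorr (jointOf pU W) Prod.snd (fun a => a.1.1) (fun a => a.1.2)

lemma maxCorrOf_le {pU : 𝒰 → ℝ} {ρ : ℝ}
    (h : ∀ f g, ccorr (jointOf pU W) Prod.snd (liftX f) (liftY g) ≤ ρ) :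
    maxCorrOf W pU ≤ ρ :=
  ciSup_le fun f => ciSup_le fun g => h f g

lemma ccorr_le_maxCorrOf (hW0 : ∀ u a, 0 ≤ W u a) (hW1 : ∀ u, ∑ a, W u a = 1)
    {pU : 𝒰 → ℝ} (hp : ∀ u, 0 ≤ pU u) (f : 𝒳 × 𝒰 → ℝ) (g : 𝒴 × 𝒰 → ℝ) :
    ccorr (jointOf pU W) Prod.snd (liftX f) (liftY g) ≤ maxCorrOf W pU := by
  have hle : ∀ (f : 𝒳 × 𝒰 → ℝ) (g : 𝒴 × 𝒰 → ℝ),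
      ccorr (jointOf pU W) Prod.snd (liftX f) (liftY g) ≤ 1 := fun f g =>
    ccorr_jointOf_le_one hW0 hW1 hp _ _
  have hg : BddAbove (Set.range fun g : 𝒴 × 𝒰 → ℝ =>
      ccorr (jointOf pU W) Prod.snd (liftX f) (liftY g)) :=
    ⟨1, Set.forall_mem_range.2 (hle f)⟩
  have hf : BddAbove (Set.range fun f : 𝒳 × 𝒰 → ℝ => ⨆ g : 𝒴 × 𝒰 → ℝ,
      ccorr (jointOf pU W) Prod.snd (liftX f) (liftY g)) :=
    ⟨1, Set.forall_mem_range.2 fun f => ciSup_le (hle f)⟩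
  exact (le_ciSup hg g).trans (le_ciSup hf f)

lemma maxCorrOf_nonneg (hW0 : ∀ u a, 0 ≤ W u a) (hW1 : ∀ u, ∑ a, W u a = 1)
    {pU : 𝒰 → ℝ} (hp : ∀ u, 0 ≤ pU u) : 0 ≤ maxCorrOf W pU := by
  refine le_trans (le_of_eq ?_) (ccorr_le_maxCorrOf hW0 hW1 hp 0 0)
  simp [ccorr, cvar, ccov_jointOf hW1, condCov, condMean, liftX]

lemma condCov_le_maxCorrOf (hW0 : ∀ u a, 0 ≤ W u a) (hW1 : ∀ u, ∑ a, W u a = 1)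
    {pU : 𝒰 → ℝ} (hp : ∀ u, 0 ≤ pU u) {u₀ : 𝒰} (hu₀ : pU u₀ ≠ 0)
    (f : 𝒳 × 𝒰 → ℝ) (g : 𝒴 × 𝒰 → ℝ) :
    condCov W (liftX f) (liftY g) u₀ ≤ maxCorrOf W pU *
      (√(condCov W (liftX f) (liftX f) u₀) * √(condCov W (liftY g) (liftY g) u₀)) := by
  set F := liftX (𝒴 := 𝒴) f
  set G := liftY (𝒳 := 𝒳) g
  rcases (mul_nonneg (Real.sqrt_nonneg (condCov W F F u₀))
    (Real.sqrt_nonneg (condCov W G G u₀))).eq_or_lt with h0 | h0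
  · rw [← h0, mul_zero, h0]
    exact condCov_le_sqrt_mul_sqrt hW0 F G u₀
  have ha := Real.sqrt_pos.1 (pos_of_mul_pos_left h0 (Real.sqrt_nonneg _))
  have hb := Real.sqrt_pos.1 (pos_of_mul_pos_right h0 (Real.sqrt_nonneg _))
  have hpu : 0 < pU u₀ := (hp u₀).lt_of_ne' hu₀
  have hcov : ∀ H K : (𝒳 × 𝒴) × 𝒰 → ℝ, ccov (jointOf pU W) Prod.snd
      (fun ω => if ω.2 = u₀ then H ω else 0) (fun ω => if ω.2 = u₀ then K ω else 0) =
      pU u₀ * condCov W H K u₀ := fun H K => by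
    simp [ccov_jointOf hW1, condCov_restrict]
  have hρ : ccorr (jointOf pU W) Prod.snd (fun ω => if ω.2 = u₀ then F ω else 0)
      (fun ω => if ω.2 = u₀ then G ω else 0) ≤ maxCorrOf W pU :=
    ccorr_le_maxCorrOf hW0 hW1 hp (fun x => if x.2 = u₀ then f x else 0)
      (fun y => if y.2 = u₀ then g y else 0)
  rw [ccorr, cvar, cvar, hcov, hcov, hcov, if_pos (by positivity), sqrt_mul_mul_sqrt_mul hpu.le,
    mul_div_mul_left _ _ hpu.ne', div_le_iff₀ h0] at hρ
  exact hρ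

lemma maxCorrOf_le_of_condCov_le (hW0 : ∀ u a, 0 ≤ W u a) (hW1 : ∀ u, ∑ a, W u a = 1)
    {pU : 𝒰 → ℝ} (hp : ∀ u, 0 ≤ pU u) {ρ : ℝ} (hρ : 0 ≤ ρ)
    (h : ∀ u, pU u ≠ 0 → ∀ (f : 𝒳 × 𝒰 → ℝ) (g : 𝒴 × 𝒰 → ℝ),
      condCov W (liftX f) (liftY g) u ≤
        ρ * (√(condCov W (liftX f) (liftX f) u) * √(condCov W (liftY g) (liftY g) u))) :
    maxCorrOf W pU ≤ ρ :=
  maxCorrOf_le fun f g => ccorr_jointOf_le hW0 hW1 hp hρ fun u hu => h u hu f g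

lemma maxCorrOf_le_of_smul_le (hW0 : ∀ u a, 0 ≤ W u a) (hW1 : ∀ u, ∑ a, W u a = 1)
    {pU rU : 𝒰 → ℝ} (hp : ∀ u, 0 ≤ pU u) (hr : ∀ u, 0 ≤ rU u) {c : ℝ} (hc : 0 < c)
    (hle : ∀ u, c * pU u ≤ rU u) : maxCorrOf W pU ≤ maxCorrOf W rU :=
  maxCorrOf_le_of_condCov_le hW0 hW1 hp (maxCorrOf_nonneg hW0 hW1 hr) fun u hu =>
    condCov_le_maxCorrOf hW0 hW1 hr
      ((mul_pos hc ((hp u).lt_of_ne' hu)).trans_le (hle u)).ne'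

lemma maxCorrOf_mix_le_max (hW0 : ∀ u a, 0 ≤ W u a) (hW1 : ∀ u, ∑ a, W u a = 1)
    {pU qU : 𝒰 → ℝ} (hp : ∀ u, 0 ≤ pU u) (hq : ∀ u, 0 ≤ qU u) {l : ℝ} (hl0 : 0 ≤ l)
    (hl1 : l ≤ 1) :
    maxCorrOf W (fun u => l * pU u + (1 - l) * qU u) ≤ max (maxCorrOf W pU) (maxCorrOf W qU) := by
  have hmix : ∀ u, 0 ≤ l * pU u + (1 - l) * qU u := fun u =>
    add_nonneg (mul_nonneg hl0 (hp u)) (mul_nonneg (sub_nonneg.2 hl1) (hq u))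
  refine maxCorrOf_le_of_condCov_le hW0 hW1 hmix
    ((maxCorrOf_nonneg hW0 hW1 hp).trans (le_max_left _ _)) fun u hu f g => ?_
  have hsqrt := mul_nonneg (Real.sqrt_nonneg (condCov W (liftX f) (liftX f) u))
    (Real.sqrt_nonneg (condCov W (liftY g) (liftY g) u))
  by_cases hpu : pU u = 0
  · have hqu : qU u ≠ 0 := fun hqu => hu (by simp [hpu, hqu])
    exact (condCov_le_maxCorrOf hW0 hW1 hq hqu f g).trans
      (mul_le_mul_of_nonneg_right (le_max_right _ _) hsqrt)
  · exact (condCov_le_maxCorrOf hW0 hW1 hp hpu f g).trans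
      (mul_le_mul_of_nonneg_right (le_max_left _ _) hsqrt)

lemma maxCorrOf_mix_eq_max (hW0 : ∀ u a, 0 ≤ W u a) (hW1 : ∀ u, ∑ a, W u a = 1)
    {pU qU : 𝒰 → ℝ} (hp : ∀ u, 0 ≤ pU u) (hq : ∀ u, 0 ≤ qU u) {l : ℝ} (hl0 : 0 < l)
    (hl1 : l < 1) :
    maxCorrOf W (fun u => l * pU u + (1 - l) * qU u) = max (maxCorrOf W pU) (maxCorrOf W qU) := by
  have hlp : ∀ u, 0 ≤ l * pU u := fun u => mul_nonneg hl0.le (hp u)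
  have hlq : ∀ u, 0 ≤ (1 - l) * qU u := fun u => mul_nonneg (sub_nonneg.2 hl1.le) (hq u)
  have hmix : ∀ u, 0 ≤ l * pU u + (1 - l) * qU u := fun u => add_nonneg (hlp u) (hlq u)
  refine le_antisymm (maxCorrOf_mix_le_max hW0 hW1 hp hq hl0.le hl1.le) (max_le ?_ ?_)
  · exact maxCorrOf_le_of_smul_le hW0 hW1 hp hmix hl0 fun u => le_add_of_nonneg_right (hlq u)
  · exact maxCorrOf_le_of_smul_le hW0 hW1 hq hmix (sub_pos.2 hl1) fun u =>
      le_add_of_nonneg_left (hlp u)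

/-- Concavity of conditional maximal correlation in `P_U`. For a fixed
conditional distribution `P_{XY|U}`, the map `P_U ↦ ρ_m(X;Y|U)` is concave; in fact, for
`λ ∈ (0,1)` the conditional maximal correlation under the mixture `λ·P_U + (1−λ)·Q_U`
equals the maximum of the conditional maximal correlations under `P_U` and under `Q_U`. -/
theorem maxCorr_concave_in_pU {𝒳 𝒴 𝒰 : Type} [Fintype 𝒳] [Fintype 𝒴] [Fintype 𝒰]
    (W : 𝒰 → 𝒳 × 𝒴 → ℝ)
    (hW : ∀ u, (∀ a, 0 ≤ W u a) ∧ ∑ a, W u a = 1)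
    (pU qU : 𝒰 → ℝ) (hpU : (∀ u, 0 ≤ pU u) ∧ ∑ u, pU u = 1)
    (hqU : (∀ u, 0 ≤ qU u) ∧ ∑ u, qU u = 1) :
    (∀ l : ℝ, 0 ≤ l → l ≤ 1 →
      l * maxCorr (jointOf pU W) Prod.snd (fun a => a.1.1) (fun a => a.1.2) +
        (1 - l) * maxCorr (jointOf qU W) Prod.snd (fun a => a.1.1) (fun a => a.1.2) ≤
      maxCorr (jointOf (fun u => l * pU u + (1 - l) * qU u) W) Prod.snd
        (fun a => a.1.1) (fun a => a.1.2)) ∧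
    (∀ l : ℝ, 0 < l → l < 1 →
      maxCorr (jointOf (fun u => l * pU u + (1 - l) * qU u) W) Prod.snd
        (fun a => a.1.1) (fun a => a.1.2) =
      max (maxCorr (jointOf pU W) Prod.snd (fun a => a.1.1) (fun a => a.1.2))
        (maxCorr (jointOf qU W) Prod.snd (fun a => a.1.1) (fun a => a.1.2))) := by
  have hEq : ∀ l : ℝ, 0 < l → l < 1 → maxCorrOf W (fun u => l * pU u + (1 - l) * qU u) =
      max (maxCorrOf W pU) (maxCorrOf W qU) := fun l hl0 hl1 =>
    maxCorrOf_mix_eq_max (fun u => (hW u).1) (fun u => (hW u).2) hpU.1 hqU.1 hl0 hl1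
  refine ⟨fun l hl0 hl1 => ?_, hEq⟩
  rcases hl0.eq_or_lt with rfl | hl0
  · simp
  rcases hl1.eq_or_lt with rfl | hl1
  · simp
  calc l * maxCorrOf W pU + (1 - l) * maxCorrOf W qU
      ≤ max (maxCorrOf W pU) (maxCorrOf W qU) := by
        simpa only [smul_eq_mul] using Convex.combo_le_max (maxCorrOf W pU) (maxCorrOf W qU)
          hl0.le (sub_nonneg.2 hl1.le) (add_sub_cancel l 1)
    _ = _ := (hEq l hl0 hl1).symm

end GCI
end
end

section
/- Let (U, X, Y, V) have a joint distribution P_{UXYV} on finite alphabets such that U → X → Y and X → Y → V are Markov chains (i.e., P_{UXYV} = P_{U|X}·P_{XY}·P_{V|Y}). Then ρ_m((U,X); (V,Y)) = max{ ρ_m(X;Y), ρ_m(U;V | (X,Y)) }. -/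
/-!
Under the two Markov chains, `U` and `V` are conditionally independent given `(X, Y)`, so
`ρ_m(U; V | X, Y) = 0`, and `E[f(U,X) g(V,Y)] = E[F(X) G(Y)]` for `F = E[f | X]` and
`G = E[g | Y]`. Passing from `f, g` to `F, G` keeps the covariance and, by conditional Jensen,
does not increase the variances, so a positive correlation of `f(U,X)` and `g(V,Y)` is at most
that of `F(X)` and `G(Y)`, hence at most `ρ_m(X; Y)`. Conversely, functions of `X` and `Y` are
functions of `(U,X)` and `(V,Y)`.
-/

open scoped BigOperators Classical

noncomputable section

namespace GCI

variable {Ω : Type} [Fintype Ω]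

section CondExp

variable {𝒲 : Type} {p : Ω → ℝ} {W : Ω → 𝒲}

lemma eq_zero_of_marg_eq_zero (hp0 : ∀ ω, 0 ≤ p ω) {w : 𝒲} (hw : marg p W w = 0) {ω : Ω}
    (hω : W ω = w) : p ω = 0 := by
  have hle : ∀ ω ∈ Finset.univ, 0 ≤ if W ω = w then p ω else 0 := fun ω _ => by
    split_ifs <;> simp [hp0 ω]
  simpa [hω] using (Finset.sum_eq_zero_iff_of_nonneg hle).1 hw ω (Finset.mem_univ ω)

lemma marg_ne_zero_of_fiber_subset {𝒳 : Type} {X : Ω → 𝒳} (hp0 : ∀ ω, 0 ≤ p ω) {w : 𝒲}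
    {x : 𝒳} (hwx : ∀ ω, W ω = w → X ω = x) (hw : marg p W w ≠ 0) : marg p X x ≠ 0 := by
  refine fun hx => hw (Finset.sum_eq_zero fun ω _ => ?_)
  split_ifs with h
  · exact eq_zero_of_marg_eq_zero hp0 hx (hwx ω h)
  · rfl

lemma sum_fiber_eq_marg_mul_cexp (hp0 : ∀ ω, 0 ≤ p ω) (w : 𝒲) (f : Ω → ℝ) :
    (∑ ω, if W ω = w then p ω * f ω else 0) = marg p W w * cexp p W w f := by
  by_cases hw : marg p W w = 0
  · rw [hw, zero_mul]
    refine Finset.sum_eq_zero fun ω _ => ?_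
    split_ifs with h
    · rw [eq_zero_of_marg_eq_zero hp0 hw h, zero_mul]
    · rfl
  · rw [cexp, mul_div_cancel₀ _ hw]

lemma expec_eq_sum_marg_mul_cexp [Fintype 𝒲] (hp0 : ∀ ω, 0 ≤ p ω) (f : Ω → ℝ) :
    expec p f = ∑ w, marg p W w * cexp p W w f := by
  simp_rw [← sum_fiber_eq_marg_mul_cexp hp0]
  rw [Finset.sum_comm]
  simp [expec]

lemma cexp_congr {w : 𝒲} {f g : Ω → ℝ} (h : ∀ ω, W ω = w → f ω = g ω) :
    cexp p W w f = cexp p W w g := by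
  unfold cexp
  congr 1
  refine Finset.sum_congr rfl fun ω _ => ?_
  split_ifs with hω
  · rw [h ω hω]
  · rfl

lemma cexp_const {w : 𝒲} (hw : marg p W w ≠ 0) (c : ℝ) : cexp p W w (fun _ => c) = c := by
  simp only [cexp, ← ite_zero_mul, ← Finset.sum_mul]
  rw [mul_comm]
  exact mul_div_cancel_right₀ c hw

lemma cexp_sub (w : 𝒲) (f g : Ω → ℝ) :
    cexp p W w (fun ω => f ω - g ω) = cexp p W w f - cexp p W w g := by
  simp only [cexp, mul_sub, ← sub_div, ← Finset.sum_sub_distrib]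
  congr 1
  refine Finset.sum_congr rfl fun ω _ => ?_
  split_ifs <;> simp

lemma cexp_sub_const {w : 𝒲} (hw : marg p W w ≠ 0) (f : Ω → ℝ) (c : ℝ) :
    cexp p W w (fun ω => f ω - c) = cexp p W w f - c := by
  rw [cexp_sub, cexp_const hw]

lemma cexp_mul_const (w : 𝒲) (f : Ω → ℝ) (c : ℝ) :
    cexp p W w (fun ω => f ω * c) = cexp p W w f * c := by
  simp only [cexp, div_mul_eq_mul_div, Finset.sum_mul, ite_zero_mul, mul_assoc]

variable [Fintype 𝒲]

lemma expec_sub_cexp_mul_eq_zero (hp0 : ∀ ω, 0 ≤ p ω) (f : Ω → ℝ) (h : 𝒲 → ℝ) :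
    expec p (fun ω => (f ω - cexp p W (W ω) f) * h (W ω)) = 0 := by
  rw [expec_eq_sum_marg_mul_cexp (W := W) hp0]
  refine Finset.sum_eq_zero fun w _ => ?_
  by_cases hw : marg p W w = 0
  · rw [hw, zero_mul]
  · rw [cexp_congr (g := fun ω => (f ω - cexp p W w f) * h w) fun ω hω => by rw [hω],
      cexp_mul_const, cexp_sub_const hw, sub_self, zero_mul, mul_zero]

lemma expec_cexp (hp0 : ∀ ω, 0 ≤ p ω) (f : Ω → ℝ) :
    expec p (fun ω => cexp p W (W ω) f) = expec p f := by
  have h := expec_sub_cexp_mul_eq_zero hp0 (W := W) f fun _ => 1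
  simp only [expec, mul_one, mul_sub, Finset.sum_sub_distrib] at h ⊢
  linarith

lemma expec_cexp_mul_self_le (hp0 : ∀ ω, 0 ≤ p ω) (f : Ω → ℝ) :
    expec p (fun ω => cexp p W (W ω) f * cexp p W (W ω) f) ≤ expec p (fun ω => f ω * f ω) := by
  set F := fun ω => cexp p W (W ω) f
  have horth := expec_sub_cexp_mul_eq_zero hp0 (W := W) f fun w => cexp p W w f
  have hsq : 0 ≤ expec p (fun ω => (f ω - F ω) ^ 2) :=
    Finset.sum_nonneg fun ω _ => mul_nonneg (hp0 ω) (sq_nonneg _)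
  have hsplit : expec p (fun ω => f ω * f ω) = expec p (fun ω => (f ω - F ω) ^ 2) +
      2 * expec p (fun ω => (f ω - F ω) * F ω) + expec p (fun ω => F ω * F ω) := by
    simp only [expec, Finset.mul_sum, ← Finset.sum_add_distrib]
    exact Finset.sum_congr rfl fun ω _ => by ring
  change expec p (fun ω => (f ω - F ω) * F ω) = 0 at horth
  linarith

end CondExp

section Fibers

variable {𝒜 𝒳 : Type} [Fintype 𝒜] (p : Ω → ℝ) (A : Ω → 𝒜) (X : Ω → 𝒳) (x : 𝒳)

lemma sum_fiber_eq_sum_marg_mul (φ : 𝒜 → ℝ) :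
    (∑ ω, if X ω = x then p ω * φ (A ω) else 0) =
      ∑ a, marg p (fun ω => (A ω, X ω)) (a, x) * φ a := by
  simp only [marg, Finset.sum_mul, ite_zero_mul, Prod.mk.injEq, ite_and]
  rw [Finset.sum_comm]
  simp

lemma sum_fiber_eq_sum_marg_mul' (φ : 𝒜 → ℝ) :
    (∑ ω, if X ω = x then p ω * φ (A ω) else 0) =
      ∑ a, marg p (fun ω => (X ω, A ω)) (x, a) * φ a := by
  simp only [marg, Finset.sum_mul, ite_zero_mul, Prod.mk.injEq, ite_and]
  rw [Finset.sum_comm]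
  simp

end Fibers

section Correlation

variable {𝒰 : Type} {p : Ω → ℝ} (U : Ω → 𝒰)

lemma cvar_nonneg (hp0 : ∀ ω, 0 ≤ p ω) (f : Ω → ℝ) : 0 ≤ cvar p U f :=
  Finset.sum_nonneg fun ω _ => mul_nonneg (hp0 ω) (mul_self_nonneg _)

lemma ccov_sq_le_cvar_mul_cvar (hp0 : ∀ ω, 0 ≤ p ω) (f g : Ω → ℝ) :
    ccov p U f g ^ 2 ≤ cvar p U f * cvar p U g :=
  Finset.sum_sq_le_sum_mul_sum_of_sq_le_mul _
    (fun ω _ => mul_nonneg (hp0 ω) (mul_self_nonneg _))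
    (fun ω _ => mul_nonneg (hp0 ω) (mul_self_nonneg _))
    (fun ω _ => le_of_eq (by ring))

lemma ccorr_le_one (hp0 : ∀ ω, 0 ≤ p ω) (f g : Ω → ℝ) : ccorr p U f g ≤ 1 := by
  unfold ccorr
  split_ifs with h
  · rw [← Real.sqrt_mul (cvar_nonneg U hp0 f), div_le_one (Real.sqrt_pos.2 h)]
    exact Real.le_sqrt_of_sq_le (ccov_sq_le_cvar_mul_cvar U hp0 f g)
  · exact zero_le_one

lemma ccorr_eq_zero_of_ccov_eq_zero {f g : Ω → ℝ} (h : ccov p U f g = 0) :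
    ccorr p U f g = 0 := by
  simp [ccorr, h]

lemma ccorr_le_max_zero_ccorr (hp0 : ∀ ω, 0 ≤ p ω) {f g F G : Ω → ℝ}
    (hcov : ccov p U f g = ccov p U F G) (hF : cvar p U F ≤ cvar p U f)
    (hG : cvar p U G ≤ cvar p U g) : ccorr p U f g ≤ max 0 (ccorr p U F G) := by
  have hF0 := cvar_nonneg U hp0 F
  have hG0 := cvar_nonneg U hp0 G
  unfold ccorr
  split_ifs with hfg hFG
  · rcases le_or_gt (ccov p U F G) 0 with hc | hc
    · exact le_max_of_le_left (div_nonpos_of_nonpos_of_nonneg (hcov ▸ hc) (by positivity))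
    · refine le_max_of_le_right ?_
      rw [hcov, ← Real.sqrt_mul (hF0.trans hF), ← Real.sqrt_mul hF0]
      exact div_le_div_of_nonneg_left hc.le (Real.sqrt_pos.2 hFG)
        (Real.sqrt_le_sqrt (mul_le_mul hF hG hG0 (hF0.trans hF)))
  · have hc : ccov p U F G ≤ 0 := by
      have hCS := ccov_sq_le_cvar_mul_cvar U hp0 F G
      have : cvar p U F * cvar p U G = 0 := le_antisymm (not_lt.1 hFG) (mul_nonneg hF0 hG0)
      nlinarith
    exact le_max_of_le_left (div_nonpos_of_nonpos_of_nonneg (hcov ▸ hc) (by positivity))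
  · exact le_max_left _ _
  · exact le_max_left _ _

end Correlation

section MaxCorr

variable {𝒰 𝒳 𝒴 : Type} {p : Ω → ℝ} (U : Ω → 𝒰) (X : Ω → 𝒳) (Y : Ω → 𝒴)

lemma le_maxCorr (hp0 : ∀ ω, 0 ≤ p ω) (f : 𝒳 × 𝒰 → ℝ) (g : 𝒴 × 𝒰 → ℝ) :
    ccorr p U (fun ω => f (X ω, U ω)) (fun ω => g (Y ω, U ω)) ≤ maxCorr p U X Y := by
  have hbdd : ∀ f : 𝒳 × 𝒰 → ℝ, BddAbove (Set.range fun g : 𝒴 × 𝒰 → ℝ =>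
      ccorr p U (fun ω => f (X ω, U ω)) (fun ω => g (Y ω, U ω))) :=
    fun f => ⟨1, Set.forall_mem_range.2 fun g => ccorr_le_one U hp0 _ _⟩
  refine le_ciSup_of_le ⟨1, Set.forall_mem_range.2 fun f => ?_⟩ f (le_ciSup (hbdd f) g)
  exact ciSup_le fun g => ccorr_le_one U hp0 _ _

lemma maxCorr_le {c : ℝ}
    (h : ∀ (f : 𝒳 × 𝒰 → ℝ) (g : 𝒴 × 𝒰 → ℝ),
      ccorr p U (fun ω => f (X ω, U ω)) (fun ω => g (Y ω, U ω)) ≤ c) :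
    maxCorr p U X Y ≤ c :=
  ciSup_le fun f => ciSup_le fun g => h f g

lemma maxCorr_nonneg (hp0 : ∀ ω, 0 ≤ p ω) : 0 ≤ maxCorr p U X Y := by
  refine le_trans (le_of_eq ?_) (le_maxCorr U X Y hp0 0 0)
  simp [ccorr, cvar, ccov, cexp, expec]

lemma maxCorr_comp_le {𝒳' 𝒴' : Type} (hp0 : ∀ ω, 0 ≤ p ω) (φ : 𝒳 → 𝒳') (ψ : 𝒴 → 𝒴') :
    maxCorr p U (fun ω => φ (X ω)) (fun ω => ψ (Y ω)) ≤ maxCorr p U X Y :=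
  maxCorr_le U _ _ fun f g =>
    le_maxCorr U X Y hp0 (fun z => f (φ z.1, z.2)) (fun z => g (ψ z.1, z.2))

lemma maxCorr_eq_zero_of_ccov_eq_zero
    (h : ∀ (f : 𝒳 × 𝒰 → ℝ) (g : 𝒴 × 𝒰 → ℝ),
      ccov p U (fun ω => f (X ω, U ω)) (fun ω => g (Y ω, U ω)) = 0) :
    maxCorr p U X Y = 0 := by
  simp only [maxCorr, ccorr_eq_zero_of_ccov_eq_zero U (h _ _), ciSup_const]

end MaxCorr

section Unconditional

variable {p : Ω → ℝ}

lemma cexp_unit (hp : IsPMF p) (f : Ω → ℝ) : cexp p (fun _ => ()) () f = expec p f := by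
  simp [cexp, marg, hp.2, expec]

lemma ccov_unit (hp : IsPMF p) (f g : Ω → ℝ) :
    ccov p (fun _ => ()) f g = expec p (fun ω => f ω * g ω) - expec p f * expec p g := by
  set a := expec p f
  set b := expec p g
  have hexpand : ∀ ω, p ω * ((f ω - a) * (g ω - b)) =
      p ω * (f ω * g ω) - b * (p ω * f ω) - a * (p ω * g ω) + a * b * p ω := fun ω => by ring
  simp only [ccov, cexp_unit hp]
  rw [expec, Finset.sum_congr rfl fun ω _ => hexpand ω]
  simp only [Finset.sum_add_distrib, Finset.sum_sub_distrib, ← Finset.mul_sum, hp.2]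
  simp only [expec, a, b]
  ring

end Unconditional

section CondIndep

variable {𝒜 ℬ 𝒲 : Type} [Fintype 𝒲] {p : Ω → ℝ} {A : Ω → 𝒜} {B : Ω → ℬ} {W : Ω → 𝒲}

lemma ccov_eq_zero_of_condIndep (hp0 : ∀ ω, 0 ≤ p ω)
    (hCI : ∀ w, marg p W w ≠ 0 → ∀ (φ : 𝒜 → ℝ) (ψ : ℬ → ℝ),
      cexp p W w (fun ω => φ (A ω) * ψ (B ω)) =
        cexp p W w (fun ω => φ (A ω)) * cexp p W w (fun ω => ψ (B ω)))
    (f : 𝒜 × 𝒲 → ℝ) (g : ℬ × 𝒲 → ℝ) :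
    ccov p W (fun ω => f (A ω, W ω)) (fun ω => g (B ω, W ω)) = 0 := by
  rw [ccov, expec_eq_sum_marg_mul_cexp (W := W) hp0]
  refine Finset.sum_eq_zero fun w _ => ?_
  by_cases hw : marg p W w = 0
  · rw [hw, zero_mul]
  have hf : cexp p W w (fun ω => f (A ω, W ω)) = cexp p W w (fun ω => f (A ω, w)) :=
    cexp_congr fun ω hω => by rw [hω]
  rw [cexp_congr (g := fun ω => (f (A ω, w) - cexp p W w (fun ω => f (A ω, W ω))) *
      (g (B ω, w) - cexp p W w (fun ω => g (B ω, W ω)))) fun ω hω => by rw [hω],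
    hCI w hw (fun a => f (a, w) - _) (fun b => g (b, w) - _), cexp_sub_const hw, hf, sub_self,
    zero_mul, mul_zero]

end CondIndep

/-- `E[φ(A) ψ(B) | X, Y] = E[φ(A) | X] · E[ψ(B) | Y]`: the Markov chains `A → X → Y` and
`X → Y → B` together. -/
def IsDoubleMarkov {𝒜 𝒳 𝒴 ℬ : Type} (p : Ω → ℝ) (A : Ω → 𝒜) (X : Ω → 𝒳) (Y : Ω → 𝒴)
    (B : Ω → ℬ) : Prop :=
  ∀ x y, marg p (fun ω => (X ω, Y ω)) (x, y) ≠ 0 → ∀ (φ : 𝒜 → ℝ) (ψ : ℬ → ℝ),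
    cexp p (fun ω => (X ω, Y ω)) (x, y) (fun ω => φ (A ω) * ψ (B ω)) =
      cexp p X x (fun ω => φ (A ω)) * cexp p Y y (fun ω => ψ (B ω))

namespace IsDoubleMarkov

variable {𝒜 𝒳 𝒴 ℬ : Type} {p : Ω → ℝ} {A : Ω → 𝒜} {X : Ω → 𝒳}
  {Y : Ω → 𝒴} {B : Ω → ℬ}

lemma condIndep (hp0 : ∀ ω, 0 ≤ p ω) (hM : IsDoubleMarkov p A X Y B) {x : 𝒳} {y : 𝒴}
    (hxy : marg p (fun ω => (X ω, Y ω)) (x, y) ≠ 0) (φ : 𝒜 → ℝ) (ψ : ℬ → ℝ) :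
    cexp p (fun ω => (X ω, Y ω)) (x, y) (fun ω => φ (A ω) * ψ (B ω)) =
      cexp p (fun ω => (X ω, Y ω)) (x, y) (fun ω => φ (A ω)) *
        cexp p (fun ω => (X ω, Y ω)) (x, y) (fun ω => ψ (B ω)) := by
  have hx : marg p X x ≠ 0 :=
    marg_ne_zero_of_fiber_subset hp0 (fun ω h => (Prod.ext_iff.1 h).1) hxy
  have hy : marg p Y y ≠ 0 :=
    marg_ne_zero_of_fiber_subset hp0 (fun ω h => (Prod.ext_iff.1 h).2) hxy
  have hA := hM x y hxy φ fun _ => 1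
  have hB := hM x y hxy (fun _ => 1) ψ
  simp only [mul_one, one_mul, cexp_const hx, cexp_const hy] at hA hB
  rw [hM x y hxy, hA, hB]

variable [Fintype 𝒳] [Fintype 𝒴]

lemma expec_mul_eq_expec_cexp_mul_cexp (hp0 : ∀ ω, 0 ≤ p ω) (hM : IsDoubleMarkov p A X Y B)
    (f : 𝒜 × 𝒳 → ℝ) (g : ℬ × 𝒴 → ℝ) :
    expec p (fun ω => f (A ω, X ω) * g (B ω, Y ω)) =
      expec p (fun ω => cexp p X (X ω) (fun ω' => f (A ω', X ω')) *
        cexp p Y (Y ω) (fun ω' => g (B ω', Y ω'))) := by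
  simp only [expec_eq_sum_marg_mul_cexp (W := fun ω => (X ω, Y ω)) hp0]
  refine Finset.sum_congr rfl fun ⟨x, y⟩ _ => ?_
  by_cases hxy : marg p (fun ω => (X ω, Y ω)) (x, y) = 0
  · rw [hxy, zero_mul, zero_mul]
  have hF : cexp p X x (fun ω => f (A ω, X ω)) = cexp p X x (fun ω => f (A ω, x)) :=
    cexp_congr fun ω hω => by rw [hω]
  have hG : cexp p Y y (fun ω => g (B ω, Y ω)) = cexp p Y y (fun ω => g (B ω, y)) :=
    cexp_congr fun ω hω => by rw [hω]
  have hL : cexp p (fun ω => (X ω, Y ω)) (x, y) (fun ω => f (A ω, X ω) * g (B ω, Y ω)) =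
      cexp p (fun ω => (X ω, Y ω)) (x, y) (fun ω => f (A ω, x) * g (B ω, y)) :=
    cexp_congr fun ω hω => by obtain ⟨rfl, rfl⟩ := Prod.mk.inj hω; rfl
  have hR : cexp p (fun ω => (X ω, Y ω)) (x, y) (fun ω =>
      cexp p X (X ω) (fun ω' => f (A ω', X ω')) * cexp p Y (Y ω) (fun ω' => g (B ω', Y ω'))) =
      cexp p (fun ω => (X ω, Y ω)) (x, y) (fun _ =>
        cexp p X x (fun ω' => f (A ω', X ω')) * cexp p Y y (fun ω' => g (B ω', Y ω'))) :=
    cexp_congr fun ω hω => by obtain ⟨rfl, rfl⟩ := Prod.mk.inj hω; rfl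
  rw [hL, hR, cexp_const hxy, hF, hG, hM x y hxy (fun a => f (a, x)) (fun b => g (b, y))]

lemma maxCorr_eq_zero (hp0 : ∀ ω, 0 ≤ p ω) (hM : IsDoubleMarkov p A X Y B) :
    maxCorr p (fun ω => (X ω, Y ω)) A B = 0 :=
  maxCorr_eq_zero_of_ccov_eq_zero _ _ _ (ccov_eq_zero_of_condIndep hp0
    fun w hw => by obtain ⟨x, y⟩ := w; exact hM.condIndep hp0 hw)

lemma maxCorr0_pair_le (hp : IsPMF p) (hM : IsDoubleMarkov p A X Y B) :
    maxCorr0 p (fun ω => (A ω, X ω)) (fun ω => (B ω, Y ω)) ≤ maxCorr0 p X Y := by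
  refine maxCorr_le _ _ _ fun f g => ?_
  set F : 𝒳 → ℝ := fun x => cexp p X x fun ω => f ((A ω, X ω), ())
  set G : 𝒴 → ℝ := fun y => cexp p Y y fun ω => g ((B ω, Y ω), ())
  have hcov : ccov p (fun _ => ()) (fun ω => f ((A ω, X ω), ())) (fun ω => g ((B ω, Y ω), ())) =
      ccov p (fun _ => ()) (fun ω => F (X ω)) (fun ω => G (Y ω)) := by
    rw [ccov_unit hp, ccov_unit hp, hM.expec_mul_eq_expec_cexp_mul_cexp hp.1
      (fun z => f (z, ())) (fun z => g (z, ())), expec_cexp hp.1, expec_cexp hp.1]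
  have hvarF : cvar p (fun _ => ()) (fun ω => F (X ω)) ≤
      cvar p (fun _ => ()) (fun ω => f ((A ω, X ω), ())) := by
    rw [cvar, cvar, ccov_unit hp, ccov_unit hp, expec_cexp hp.1]
    linarith [expec_cexp_mul_self_le hp.1 (W := X) fun ω => f ((A ω, X ω), ())]
  have hvarG : cvar p (fun _ => ()) (fun ω => G (Y ω)) ≤
      cvar p (fun _ => ()) (fun ω => g ((B ω, Y ω), ())) := by
    rw [cvar, cvar, ccov_unit hp, ccov_unit hp, expec_cexp hp.1]
    linarith [expec_cexp_mul_self_le hp.1 (W := Y) fun ω => g ((B ω, Y ω), ())]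
  calc _ ≤ max 0 (ccorr p (fun _ => ()) (fun ω => F (X ω)) (fun ω => G (Y ω))) :=
        ccorr_le_max_zero_ccorr _ hp.1 hcov hvarF hvarG
    _ ≤ max 0 (maxCorr0 p X Y) :=
        max_le_max le_rfl (le_maxCorr _ X Y hp.1 (fun z => F z.1) (fun z => G z.1))
    _ = maxCorr0 p X Y := max_eq_right (maxCorr_nonneg _ _ _ hp.1)

end IsDoubleMarkov

theorem maxCorr0_pair_eq_max_of_isDoubleMarkov {𝒜 𝒳 𝒴 ℬ : Type} [Fintype 𝒳] [Fintype 𝒴]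
    {p : Ω → ℝ} {A : Ω → 𝒜} {X : Ω → 𝒳} {Y : Ω → 𝒴} {B : Ω → ℬ} (hp : IsPMF p)
    (hM : IsDoubleMarkov p A X Y B) :
    maxCorr0 p (fun ω => (A ω, X ω)) (fun ω => (B ω, Y ω)) =
      max (maxCorr0 p X Y) (maxCorr p (fun ω => (X ω, Y ω)) A B) := by
  rw [hM.maxCorr_eq_zero hp.1, max_eq_left (a := maxCorr0 p X Y) (maxCorr_nonneg _ X Y hp.1)]
  exact le_antisymm (hM.maxCorr0_pair_le hp)
    (maxCorr_comp_le (X := fun ω => (A ω, X ω)) (Y := fun ω => (B ω, Y ω)) _ hp.1 Prod.snd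
      Prod.snd)

lemma marg_mul_cexp_pair_eq {𝒰 𝒳 𝒴 𝒱 : Type} [Fintype 𝒰] [Fintype 𝒳] [Fintype 𝒴]
    [Fintype 𝒱] {p : 𝒰 × 𝒳 × 𝒴 × 𝒱 → ℝ} (hp0 : ∀ a, 0 ≤ p a) (x : 𝒳) (y : 𝒴)
    (h : 𝒰 × 𝒳 × 𝒴 × 𝒱 → ℝ) :
    marg p (fun a => (a.2.1, a.2.2.1)) (x, y) * cexp p (fun a => (a.2.1, a.2.2.1)) (x, y) h =
      ∑ u, ∑ v, p (u, x, y, v) * h (u, x, y, v) := by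
  rw [← sum_fiber_eq_marg_mul_cexp hp0]
  simp only [Fintype.sum_prod_type, Prod.mk.injEq, ite_and]
  refine Finset.sum_congr rfl fun u _ => ?_
  rw [Fintype.sum_eq_single x fun x' hx' => by simp [hx'],
    Fintype.sum_eq_single y fun y' hy' => by simp [hy']]
  simp

lemma isDoubleMarkov_of_factorization {𝒰 𝒳 𝒴 𝒱 : Type} [Fintype 𝒰] [Fintype 𝒳] [Fintype 𝒴]
    [Fintype 𝒱] {p : 𝒰 × 𝒳 × 𝒴 × 𝒱 → ℝ} (hp0 : ∀ a, 0 ≤ p a)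
    (hMarkov : ∀ (u : 𝒰) (x : 𝒳) (y : 𝒴) (v : 𝒱),
      p (u, x, y, v) * marg p (fun a => a.2.1) x * marg p (fun a => a.2.2.1) y =
        marg p (fun a => (a.1, a.2.1)) (u, x) *
          marg p (fun a => (a.2.1, a.2.2.1)) (x, y) *
          marg p (fun a => (a.2.2.1, a.2.2.2)) (y, v)) :
    IsDoubleMarkov p (fun a => a.1) (fun a => a.2.1) (fun a => a.2.2.1) (fun a => a.2.2.2) := by
  intro x y hxy φ ψ
  beta_reduce at hxy ⊢
  have hx : marg p (fun a => a.2.1) x ≠ 0 :=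
    marg_ne_zero_of_fiber_subset hp0 (fun a h => (Prod.ext_iff.1 h).1) hxy
  have hy : marg p (fun a => a.2.2.1) y ≠ 0 :=
    marg_ne_zero_of_fiber_subset hp0 (fun a h => (Prod.ext_iff.1 h).2) hxy
  have hXY := marg_mul_cexp_pair_eq hp0 x y fun a => φ a.1 * ψ a.2.2.2
  have hX := sum_fiber_eq_marg_mul_cexp hp0 (W := fun a => a.2.1) x fun a => φ a.1
  have hY := sum_fiber_eq_marg_mul_cexp hp0 (W := fun a => a.2.2.1) y fun a => ψ a.2.2.2
  rw [sum_fiber_eq_sum_marg_mul p (fun a => a.1)] at hX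
  rw [sum_fiber_eq_sum_marg_mul' p (fun a => a.2.2.2)] at hY
  have hfactor : (∑ u, ∑ v, p (u, x, y, v) * (φ u * ψ v)) *
      (marg p (fun a => a.2.1) x * marg p (fun a => a.2.2.1) y) =
      marg p (fun a => (a.2.1, a.2.2.1)) (x, y) *
        ((∑ u, marg p (fun a => (a.1, a.2.1)) (u, x) * φ u) *
          ∑ v, marg p (fun a => (a.2.2.1, a.2.2.2)) (y, v) * ψ v) := by
    rw [Finset.sum_mul_sum, Finset.mul_sum, Finset.sum_mul]
    refine Finset.sum_congr rfl fun u _ => ?_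
    rw [Finset.mul_sum, Finset.sum_mul]
    refine Finset.sum_congr rfl fun v _ => ?_
    linear_combination (φ u * ψ v) * hMarkov u x y v
  -- after multiplying by `P(x,y) P(x) P(y)` the claim is the hypothesis summed over `u` and `v`
  apply mul_left_cancel₀ (mul_ne_zero (mul_ne_zero hxy hx) hy)
  rw [hX, hY] at hfactor
  linear_combination (marg p (fun a => a.2.1) x * marg p (fun a => a.2.2.1) y) * hXY + hfactor

/-- If `P_{UXYV} = P_{U|X}·P_{XY}·P_{V|Y}` (i.e. `U → X → Y` and
`X → Y → V` are Markov chains), then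
`ρ_m((U,X);(V,Y)) = max{ρ_m(X;Y), ρ_m(U;V|(X,Y))}`. The factorization hypothesis is
expressed as `P(u,x,y,v)·P_X(x)·P_Y(y) = P_{UX}(u,x)·P_{XY}(x,y)·P_{YV}(y,v)`. -/
theorem maxCorr_double_markov {𝒰 𝒳 𝒴 𝒱 : Type} [Fintype 𝒰] [Fintype 𝒳] [Fintype 𝒴]
    [Fintype 𝒱] (p : 𝒰 × 𝒳 × 𝒴 × 𝒱 → ℝ) (hp : IsPMF p)
    (hMarkov : ∀ (u : 𝒰) (x : 𝒳) (y : 𝒴) (v : 𝒱),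
      p (u, x, y, v) * marg p (fun a => a.2.1) x * marg p (fun a => a.2.2.1) y =
        marg p (fun a => (a.1, a.2.1)) (u, x) *
          marg p (fun a => (a.2.1, a.2.2.1)) (x, y) *
          marg p (fun a => (a.2.2.1, a.2.2.2)) (y, v)) :
    maxCorr0 p (fun a => (a.1, a.2.1)) (fun a => (a.2.2.2, a.2.2.1)) =
      max (maxCorr0 p (fun a => a.2.1) fun a => a.2.2.1)
        (maxCorr p (fun a => (a.2.1, a.2.2.1)) (fun a => a.1) fun a => a.2.2.2) :=
  maxCorr0_pair_eq_max_of_isDoubleMarkov hp (isDoubleMarkov_of_factorization hp.1 hMarkov)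

end GCI
end
end
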